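/- arXiv:1912.06987 — 3 statements merged into one kernel-verified Lean document; each statement's English description precedes it below -/
import Mathlib

section
/- Let K and K^m be symmetric positive definite n×n matrices and y ∈ ℝ^n. Then y^T (K^m)^{-1} y ≤ y^T K^{-1} y + ‖(K^m)^{-1/2} y‖ · ‖(K^m)^{-1/2}(K − K^m)K^{-1/2}‖ · ‖K^{-1/2} y‖, where ‖·‖ is the spectral norm for matrices and Euclidean norm for vectors. -/
open Matrix

noncomputable def specNorm {n m : ℕ} (A : Matrix (Fin n) (Fin m) ℝ) : ℝ :=
  ‖LinearMap.toContinuousLinearMap (Matrix.toEuclideanLin A)‖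

noncomputable def euclNorm {n : ℕ} (v : Fin n → ℝ) : ℝ := Real.sqrt (v ⬝ᵥ v)

lemma euclNorm_eq_norm_toLp {n : ℕ} (v : Fin n → ℝ) : euclNorm v = ‖WithLp.toLp 2 v‖ := by
  simp [euclNorm, EuclideanSpace.norm_eq, dotProduct, sq]

lemma dotProduct_mulVec_le_euclNorm_mul_specNorm_mul_euclNorm {n m : ℕ} (u : Fin n → ℝ)
    (A : Matrix (Fin n) (Fin m) ℝ) (v : Fin m → ℝ) :
    u ⬝ᵥ (A *ᵥ v) ≤ euclNorm u * specNorm A * euclNorm v := by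
  set T := LinearMap.toContinuousLinearMap (Matrix.toEuclideanLin A)
  have hinner : u ⬝ᵥ (A *ᵥ v) = inner ℝ (WithLp.toLp 2 u) (T (WithLp.toLp 2 v)) := by
    simp [T, PiLp.inner_apply, dotProduct, mul_comm]
  calc u ⬝ᵥ (A *ᵥ v)
      ≤ ‖WithLp.toLp 2 u‖ * ‖T (WithLp.toLp 2 v)‖ := hinner ▸ real_inner_le_norm _ _
    _ ≤ ‖WithLp.toLp 2 u‖ * (‖T‖ * ‖WithLp.toLp 2 v‖) := by gcongr; exact T.le_opNorm _
    _ = euclNorm u * specNorm A * euclNorm v := by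
      rw [euclNorm_eq_norm_toLp, euclNorm_eq_norm_toLp, specNorm, mul_assoc]

theorem stmt_5_general {n : ℕ} (K Km R Rm : Matrix (Fin n) (Fin n) ℝ)
    (hK : K.PosDef) (hKm : Km.PosDef) (hRm : Rm.PosDef)
    (hRsq : R * R = K⁻¹) (hRmsq : Rm * Rm = Km⁻¹) (y : Fin n → ℝ) :
    y ⬝ᵥ (Km⁻¹ *ᵥ y) ≤
      y ⬝ᵥ (K⁻¹ *ᵥ y) +
        euclNorm (Rm *ᵥ y) * specNorm (Rm * (K - Km) * R) * euclNorm (R *ᵥ y) := by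
  have hinv_sub : Km⁻¹ - K⁻¹ = Rm * (Rm * (K - Km) * R) * R := by
    rw [inv_sub_inv (iff_of_true hKm.isUnit hK.isUnit), ← hRsq, ← hRmsq]
    noncomm_ring
  set E := Rm * (K - Km) * R
  have hRm_symm : Rmᵀ = Rm := hRm.isHermitian
  have hquad : y ⬝ᵥ (Km⁻¹ *ᵥ y) - y ⬝ᵥ (K⁻¹ *ᵥ y) = (Rm *ᵥ y) ⬝ᵥ (E *ᵥ (R *ᵥ y)) := by
    rw [← dotProduct_sub, ← sub_mulVec, hinv_sub, ← mulVec_mulVec, ← mulVec_mulVec,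
      dotProduct_mulVec, ← mulVec_transpose, hRm_symm]
  linarith [dotProduct_mulVec_le_euclNorm_mul_specNorm_mul_euclNorm (Rm *ᵥ y) E (R *ᵥ y)]

/-- perturbation bound for quadratic forms of inverses of nearby SPD kernel
matrices. `R` and `Rm` are the inverse square roots `K^{-1/2}` and `(K^m)^{-1/2}`. -/
theorem stmt_5 {n : ℕ} (K Km R Rm : Matrix (Fin n) (Fin n) ℝ)
    (hK : K.PosDef) (hKm : Km.PosDef) (hR : R.PosDef) (hRm : Rm.PosDef)
    (hRsq : R * R = K⁻¹) (hRmsq : Rm * Rm = Km⁻¹) (y : Fin n → ℝ) :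
    y ⬝ᵥ (Km⁻¹ *ᵥ y) ≤
      y ⬝ᵥ (K⁻¹ *ᵥ y) +
        euclNorm (Rm *ᵥ y) * specNorm (Rm * (K - Km) * R) * euclNorm (R *ᵥ y) :=
  stmt_5_general K Km R Rm hK hKm hRm hRsq hRmsq y
end

section
/- For any two-layer ReLU network f_m(x; θ) = (1/m)Σ_{j=1}^m a_j σ(b_j·x + c_j) of width m, there exists an (m, d+2, 1) residual network g (i.e., with m residual blocks, hidden state dimension d+2, and one neuron per block) such that g(x) = f_m(x; θ) for all x ∈ ℝ^d and the weighted path norm of g equals 3 times the path norm ‖θ‖_P = (1/m)Σ_{j=1}^m |a_j|(‖b_j‖₁ + |c_j|). -/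
open Matrix

noncomputable def relu (t : ℝ) : ℝ := max t 0

noncomputable def resZ {d : ℕ} {ι κ : Type*} [Fintype ι] [Fintype κ]
    (L : ℕ) (V : Matrix ι (Fin (d + 1)) ℝ) (U : ℕ → Matrix ι κ ℝ) (W : ℕ → Matrix κ ι ℝ)
    (x : Fin d → ℝ) : ℕ → ι → ℝ
  | 0 => V *ᵥ Fin.snoc x 1
  | l + 1 => resZ L V U W x l +
      (1 / L : ℝ) • (U l *ᵥ fun i => relu ((W l *ᵥ resZ L V U W x l) i))

noncomputable def resOut {d : ℕ} {ι κ : Type*} [Fintype ι] [Fintype κ]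
    (L : ℕ) (V : Matrix ι (Fin (d + 1)) ℝ) (U : ℕ → Matrix ι κ ℝ) (W : ℕ → Matrix κ ι ℝ)
    (α : ι → ℝ) (x : Fin d → ℝ) : ℝ :=
  α ⬝ᵥ resZ L V U W x L

noncomputable def resPathNorm {d : ℕ} {ι κ : Type*} [Fintype ι] [Fintype κ] [DecidableEq ι]
    (L : ℕ) (V : Matrix ι (Fin (d + 1)) ℝ) (U : ℕ → Matrix ι κ ℝ) (W : ℕ → Matrix κ ι ℝ)
    (α : ι → ℝ) : ℝ :=
  (fun i => |α i|) ⬝ᵥ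
    ((((List.range L).map
        (fun l => (1 : Matrix ι ι ℝ) + (3 / L : ℝ) • ((U l).map abs * (W l).map abs))).prod)
      *ᵥ ((V.map abs) *ᵥ fun _ => (1 : ℝ)))

/-! The residual stream of the network built here is `(x, 1, s)`, where `s` is the running
partial sum of the two-layer network: block `j` reads `b_j ⬝ x + c_j` through
`w_j = (b_j, c_j, 0)` and adds `a_j σ(b_j ⬝ x + c_j) / m` to the last coordinate only.
Dually, since `w_j` vanishes on the last coordinate, each factor `I + (3/m)|u_j||w_j|` of the
path norm maps `(1, s)` to `(1, s + (3/m)|a_j|(‖b_j‖₁ + |c_j|))`, so the product telescopes. -/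

namespace ResidualReLU

open Finset

theorem snoc_dotProduct_snoc {R : Type*} [NonUnitalNonAssocSemiring R] {n : ℕ}
    (u v : Fin n → R) (a b : R) :
    (Fin.snoc u a : Fin (n + 1) → R) ⬝ᵥ Fin.snoc v b = u ⬝ᵥ v + a * b := by
  simp [dotProduct, Fin.sum_univ_castSucc]

theorem snoc_add_single_last {M : Type*} [AddZeroClass M] {n : ℕ} (v : Fin n → M) (s t : M) :
    (Fin.snoc v s : Fin (n + 1) → M) + Pi.single (Fin.last n) t = Fin.snoc v (s + t) := by
  ext i
  induction i using Fin.lastCases <;> simp [Fin.castSucc_ne_last]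

theorem list_prod_map_range_mulVec {R n β : Type*} [Semiring R] [Fintype n] [DecidableEq n]
    [AddCommMonoid β] (M : ℕ → Matrix n n R) (f : β → n → R) (g : ℕ → β)
    (hM : ∀ l s, M l *ᵥ f s = f (s + g l)) (L : ℕ) (s : β) :
    ((List.range L).map M).prod *ᵥ f s = f (s + ∑ l ∈ range L, g l) := by
  induction L generalizing s with
  | zero => simp
  | succ L ih =>
    rw [List.range_succ, List.map_append, List.prod_append, List.map_singleton,
      List.prod_singleton, ← mulVec_mulVec, hM, ih, sum_range_succ, add_assoc, add_comm (g L)]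

variable {d : ℕ}

def inputMatrix (d : ℕ) : Matrix (Fin (d + 2)) (Fin (d + 1)) ℝ :=
  Matrix.of (Fin.snoc (fun i => Pi.single i 1) 0)

def blockU (d : ℕ) (a : ℝ) : Matrix (Fin (d + 2)) (Fin 1) ℝ :=
  replicateCol (Fin 1) (Pi.single (Fin.last (d + 1)) a)

def blockW (b : Fin d → ℝ) (c : ℝ) : Matrix (Fin 1) (Fin (d + 2)) ℝ :=
  replicateRow (Fin 1) (Fin.snoc (Fin.snoc b c : Fin (d + 1) → ℝ) 0)

theorem inputMatrix_mulVec (v : Fin (d + 1) → ℝ) : inputMatrix d *ᵥ v = Fin.snoc v 0 := by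
  ext i
  induction i using Fin.lastCases <;> simp [inputMatrix, mulVec]

theorem map_abs_inputMatrix : (inputMatrix d).map abs = inputMatrix d := by
  ext i j
  induction i using Fin.lastCases with
  | last => simp [inputMatrix]
  | cast i => by_cases h : j = i <;> simp [inputMatrix, h]

theorem map_abs_blockU (a : ℝ) : (blockU d a).map abs = blockU d |a| := by
  ext i j
  by_cases h : i = Fin.last _ <;> simp [blockU, h]

theorem map_abs_blockW (b : Fin d → ℝ) (c : ℝ) :
    (blockW b c).map abs = blockW (fun i => |b i|) |c| := by
  show replicateRow (Fin 1) (abs ∘ Fin.snoc (Fin.snoc b c : Fin (d + 1) → ℝ) 0) = _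
  rw [Fin.comp_snoc, Fin.comp_snoc, abs_zero]
  rfl

theorem blockU_mulVec (a : ℝ) (v : Fin 1 → ℝ) :
    blockU d a *ᵥ v = Pi.single (Fin.last _) (a * v 0) := by
  ext i
  by_cases h : i = Fin.last _ <;> simp [blockU, mulVec, dotProduct, h]

theorem blockW_mulVec_snoc (b : Fin d → ℝ) (c : ℝ) (v : Fin (d + 1) → ℝ) (s : ℝ) :
    blockW b c *ᵥ Fin.snoc v s = fun _ => Fin.snoc b c ⬝ᵥ v := by
  ext
  simp [blockW, replicateRow_mulVec_eq_const, snoc_dotProduct_snoc]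

theorem resZ_blocks (L : ℕ) (a : ℕ → ℝ) (b : ℕ → Fin d → ℝ) (c : ℕ → ℝ) (x : Fin d → ℝ)
    (l : ℕ) :
    resZ L (inputMatrix d) (fun j => blockU d (a j)) (fun j => blockW (b j) (c j)) x l
      = Fin.snoc (Fin.snoc x 1 : Fin (d + 1) → ℝ)
          ((1 / L : ℝ) * ∑ j ∈ range l, a j * relu (b j ⬝ᵥ x + c j)) := by
  induction l with
  | zero => simp [resZ, inputMatrix_mulVec]
  | succ l ih =>
    rw [resZ, ih, blockW_mulVec_snoc, blockU_mulVec, ← Pi.single_smul, smul_eq_mul,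
      snoc_add_single_last, snoc_dotProduct_snoc, mul_one, sum_range_succ, mul_add]

theorem one_add_smul_blockU_mul_blockW_mulVec_snoc (t a : ℝ) (b : Fin d → ℝ) (c : ℝ)
    (v : Fin (d + 1) → ℝ) (s : ℝ) :
    (1 + t • (blockU d a * blockW b c)) *ᵥ Fin.snoc v s
      = Fin.snoc v (s + t * (a * (Fin.snoc b c ⬝ᵥ v))) := by
  rw [add_mulVec, one_mulVec, smul_mulVec, ← mulVec_mulVec, blockW_mulVec_snoc, blockU_mulVec,
    ← Pi.single_smul, smul_eq_mul, snoc_add_single_last]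

theorem resPathNorm_blocks (L : ℕ) (a : ℕ → ℝ) (b : ℕ → Fin d → ℝ) (c : ℕ → ℝ) :
    resPathNorm L (inputMatrix d) (fun j => blockU d (a j)) (fun j => blockW (b j) (c j))
        (Pi.single (Fin.last (d + 1)) 1)
      = 3 / L * ∑ j ∈ range L, |a j| * ((∑ i, |b j i|) + |c j|) := by
  have abs_single : (fun i => |(Pi.single (Fin.last (d + 1)) 1 : Fin (d + 2) → ℝ) i|)
      = Pi.single (Fin.last (d + 1)) 1 := by
    ext i
    by_cases h : i = Fin.last _ <;> simp [h]
  have snoc_dotProduct_one (j : ℕ) :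
      (Fin.snoc (fun i => |b j i|) |c j| : Fin (d + 1) → ℝ) ⬝ᵥ (fun _ => 1)
        = (∑ i, |b j i|) + |c j| := by
    simp [dotProduct, Fin.sum_univ_castSucc]
  simp only [resPathNorm, map_abs_blockU, map_abs_blockW, map_abs_inputMatrix, abs_single,
    inputMatrix_mulVec]
  rw [list_prod_map_range_mulVec _ (Fin.snoc fun _ => 1) _
      (fun l s => one_add_smul_blockU_mul_blockW_mulVec_snoc _ _ _ _ _ s),
    single_dotProduct, Fin.snoc_last, one_mul, zero_add, ← mul_sum]
  simp only [snoc_dotProduct_one]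

end ResidualReLU

open ResidualReLU in
theorem stmt_10_general {d m : ℕ}
    (a : Fin m → ℝ) (b : Fin m → Fin d → ℝ) (c : Fin m → ℝ) :
    ∃ (V : Matrix (Fin (d + 2)) (Fin (d + 1)) ℝ)
      (U : ℕ → Matrix (Fin (d + 2)) (Fin 1) ℝ)
      (W : ℕ → Matrix (Fin 1) (Fin (d + 2)) ℝ)
      (α : Fin (d + 2) → ℝ),
      (∀ x : Fin d → ℝ,
          resOut m V U W α x = (1 / m : ℝ) * ∑ j, a j * relu (b j ⬝ᵥ x + c j)) ∧
        resPathNorm m V U W α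
          = 3 * ((1 / m : ℝ) * ∑ j, |a j| * ((∑ i, |b j i|) + |c j|)) := by
  set a' := Function.extend Fin.val a 0
  set b' := Function.extend Fin.val b 0
  set c' := Function.extend Fin.val c 0
  refine ⟨inputMatrix d, fun j => blockU d (a' j), fun j => blockW (b' j) (c' j),
    Pi.single (Fin.last (d + 1)) 1, fun x => ?_, ?_⟩
  · rw [resOut, resZ_blocks, single_dotProduct, Fin.snoc_last, one_mul,
      ← Fin.sum_univ_eq_sum_range (fun j => a' j * relu (b' j ⬝ᵥ x + c' j))]
    simp only [a', b', c', Fin.val_injective.extend_apply]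
  · rw [resPathNorm_blocks,
      ← Fin.sum_univ_eq_sum_range (fun j => |a' j| * ((∑ i, |b' j i|) + |c' j|))]
    simp only [a', b', c', Fin.val_injective.extend_apply]
    ring

/-- every width-`m` two-layer ReLU network can be represented exactly by an
`(m, d+2, 1)` residual network whose weighted path norm equals `3‖θ‖_P`. -/
theorem stmt_10 {d m : ℕ} (hm : 0 < m)
    (a : Fin m → ℝ) (b : Fin m → Fin d → ℝ) (c : Fin m → ℝ) :
    ∃ (V : Matrix (Fin (d + 2)) (Fin (d + 1)) ℝ)
      (U : ℕ → Matrix (Fin (d + 2)) (Fin 1) ℝ)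
      (W : ℕ → Matrix (Fin 1) (Fin (d + 2)) ℝ)
      (α : Fin (d + 2) → ℝ),
      (∀ x : Fin d → ℝ,
          resOut m V U W α x = (1 / m : ℝ) * ∑ j, a j * relu (b j ⬝ᵥ x + c j)) ∧
        resPathNorm m V U W α
          = 3 * ((1 / m : ℝ) * ∑ j, |a j| * ((∑ i, |b j i|) + |c j|)) :=
  stmt_10_general a b c
end

section
/- Let K and K^m be symmetric positive definite n×n matrices with ‖K − K^m‖ ≤ ε (spectral norm), and let y ∈ ℝ^n with y^T K^{-1} y ≤ B². If ‖(K^m)^{-1/2}‖·‖K − K^m‖·‖K^{-1/2}‖ ≤ 1, then y^T (K^m)^{-1} y ≤ 4B². -/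
open Matrix

lemma specNorm_nonneg {n m : ℕ} (A : Matrix (Fin n) (Fin m) ℝ) : 0 ≤ specNorm A :=
  norm_nonneg _

lemma specNorm_mul_le {n : ℕ} (A B : Matrix (Fin n) (Fin n) ℝ) :
    specNorm (A * B) ≤ specNorm A * specNorm B := by
  have h : LinearMap.toContinuousLinearMap (Matrix.toEuclideanLin (A * B)) =
      (LinearMap.toContinuousLinearMap (Matrix.toEuclideanLin A)).comp
        (LinearMap.toContinuousLinearMap (Matrix.toEuclideanLin B)) := by
    ext x
    simp [Matrix.toEuclideanLin_apply, Matrix.mulVec_mulVec]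
  unfold specNorm
  rw [h]
  exact ContinuousLinearMap.opNorm_comp_le _ _

lemma norm_equiv_symm {n : ℕ} (x : Fin n → ℝ) :
    ‖(WithLp.equiv 2 (Fin n → ℝ)).symm x‖ = Real.sqrt (x ⬝ᵥ x) := by
  rw [EuclideanSpace.norm_eq]
  congr 1
  simp [dotProduct, sq]

lemma dot_mulVec_le {n : ℕ} (A : Matrix (Fin n) (Fin n) ℝ) (x v : Fin n → ℝ) :
    x ⬝ᵥ (A *ᵥ v) ≤ specNorm A * (Real.sqrt (x ⬝ᵥ x) * Real.sqrt (v ⬝ᵥ v)) := by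
  set x' := (WithLp.equiv 2 (Fin n → ℝ)).symm x with hx'
  set v' := (WithLp.equiv 2 (Fin n → ℝ)).symm v with hv'
  have key : x ⬝ᵥ (A *ᵥ v) = inner ℝ x' (Matrix.toEuclideanLin A v') := by
    rw [hv', Matrix.toEuclideanLin_apply_piLp_toLp]
    simp [PiLp.inner_apply, dotProduct, hx', mul_comm]
  rw [key]
  calc (inner ℝ x' (Matrix.toEuclideanLin A v') : ℝ)
      ≤ ‖x'‖ * ‖Matrix.toEuclideanLin A v'‖ := real_inner_le_norm _ _
    _ ≤ ‖x'‖ * (specNorm A * ‖v'‖) := by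
        apply mul_le_mul_of_nonneg_left _ (norm_nonneg _)
        exact (LinearMap.toContinuousLinearMap (Matrix.toEuclideanLin A)).le_opNorm v'
    _ = specNorm A * (‖x'‖ * ‖v'‖) := by ring
    _ = specNorm A * (Real.sqrt (x ⬝ᵥ x) * Real.sqrt (v ⬝ᵥ v)) := by
        rw [hx', hv', norm_equiv_symm, norm_equiv_symm]

/-- if `K, K^m` are SPD, `yᵀK⁻¹y ≤ B²`, and
`‖(K^m)^{-1/2}‖·‖K − K^m‖·‖K^{-1/2}‖ ≤ 1` (with `R = K^{-1/2}`, `Rm = (K^m)^{-1/2}` the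
inverses of the PD square roots), then `yᵀ(K^m)⁻¹y ≤ 4B²`. -/
theorem stmt_14 {n : ℕ} (K Km R Rm : Matrix (Fin n) (Fin n) ℝ)
    (hK : K.PosDef) (hKm : Km.PosDef) (hR : R.PosDef) (hRm : Rm.PosDef)
    (hRsq : R * R = K⁻¹) (hRmsq : Rm * Rm = Km⁻¹)
    (y : Fin n → ℝ) (B : ℝ) (hB : 0 ≤ B)
    (hquad : y ⬝ᵥ (K⁻¹ *ᵥ y) ≤ B ^ 2)
    (hpert : specNorm Rm * specNorm (K - Km) * specNorm R ≤ 1) :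
    y ⬝ᵥ (Km⁻¹ *ᵥ y) ≤ 4 * B ^ 2 := by
  have hdiff : Km⁻¹ - K⁻¹ = Km⁻¹ * (K - Km) * K⁻¹ := by
    have h1 : Km⁻¹ * K * K⁻¹ = Km⁻¹ := by
      rw [Matrix.mul_assoc, Matrix.mul_nonsing_inv _ hK.det_pos.ne'.isUnit, Matrix.mul_one]
    have h2 : Km⁻¹ * Km * K⁻¹ = K⁻¹ := by
      rw [Matrix.nonsing_inv_mul _ hKm.det_pos.ne'.isUnit, Matrix.one_mul]
    rw [Matrix.mul_sub, Matrix.sub_mul, h1, h2]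
  set u := R *ᵥ y with hu
  set v := Rm *ᵥ y with hv
  set p := y ⬝ᵥ (K⁻¹ *ᵥ y) with hp
  set q := y ⬝ᵥ (Km⁻¹ *ᵥ y) with hq
  have hRsym : Rᵀ = R := hR.isHermitian.eq
  have hRmsym : Rmᵀ = Rm := hRm.isHermitian.eq
  have hpu : p = u ⬝ᵥ u := by
    rw [hp, ← hRsq, ← Matrix.mulVec_mulVec, Matrix.dotProduct_mulVec,
      ← Matrix.mulVec_transpose, hRsym]
  have hqv : q = v ⬝ᵥ v := by
    rw [hq, ← hRmsq, ← Matrix.mulVec_mulVec, Matrix.dotProduct_mulVec,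
      ← Matrix.mulVec_transpose, hRmsym]
  have hpnn : 0 ≤ p := by
    rw [hpu]; exact Finset.sum_nonneg fun i _ => mul_self_nonneg _
  have hqnn : 0 ≤ q := by
    rw [hqv]; exact Finset.sum_nonneg fun i _ => mul_self_nonneg _
  -- middle term
  set M := Rm * (K - Km) * R with hM
  have hmid : q - p = v ⬝ᵥ (M *ᵥ u) := by
    have : q - p = y ⬝ᵥ ((Km⁻¹ * (K - Km) * K⁻¹) *ᵥ y) := by
      rw [← hdiff, Matrix.sub_mulVec, dotProduct_sub, hp, hq]
    rw [this, ← hRmsq, ← hRsq, hv, hu, hM]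
    rw [show Rm * Rm * (K - Km) * (R * R) = Rm * (Rm * (K - Km) * R) * R by
      noncomm_ring]
    rw [← Matrix.mulVec_mulVec, ← Matrix.mulVec_mulVec, Matrix.dotProduct_mulVec,
      ← Matrix.mulVec_transpose, hRmsym]
  have hMnorm : specNorm M ≤ 1 := by
    calc specNorm M ≤ specNorm (Rm * (K - Km)) * specNorm R := specNorm_mul_le _ _
      _ ≤ specNorm Rm * specNorm (K - Km) * specNorm R := by
          apply mul_le_mul_of_nonneg_right (specNorm_mul_le _ _) (specNorm_nonneg _)
      _ ≤ 1 := hpert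
  have hbound : v ⬝ᵥ (M *ᵥ u) ≤ Real.sqrt q * Real.sqrt p := by
    calc v ⬝ᵥ (M *ᵥ u) ≤ specNorm M * (Real.sqrt (v ⬝ᵥ v) * Real.sqrt (u ⬝ᵥ u)) :=
          dot_mulVec_le _ _ _
      _ ≤ 1 * (Real.sqrt (v ⬝ᵥ v) * Real.sqrt (u ⬝ᵥ u)) := by
          apply mul_le_mul_of_nonneg_right hMnorm
          positivity
      _ = Real.sqrt q * Real.sqrt p := by rw [one_mul, ← hpu, ← hqv]
  have hsp : Real.sqrt p ≤ B := by
    rw [show B = Real.sqrt (B ^ 2) by rw [Real.sqrt_sq hB]]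
    exact Real.sqrt_le_sqrt hquad
  have hkey : q ≤ B ^ 2 + Real.sqrt q * B := by
    have h1 : q ≤ p + Real.sqrt q * Real.sqrt p := by linarith [hmid, hbound]
    have h2 : Real.sqrt q * Real.sqrt p ≤ Real.sqrt q * B :=
      mul_le_mul_of_nonneg_left hsp (Real.sqrt_nonneg _)
    linarith
  have hsq : Real.sqrt q ^ 2 = q := Real.sq_sqrt hqnn
  nlinarith [Real.sqrt_nonneg q, sq_nonneg (Real.sqrt q - 2 * B)]
end
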